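/- arXiv:2509.14569 — 2 statements merged into one kernel-verified Lean document; each statement's English description precedes it below -/
import Mathlib

section
/- Let p ≥ 1 and q be integers with p² + 4q > 0, set α = (p + √(p² + 4q))/2, β = (p − √(p² + 4q))/2, let a, b be integers with c₁ = (b − aβ)/(α − β) > 0, and define Wₙ = c₁αⁿ − c₂βⁿ where c₂ = (b − aα)/(α − β). Let m, t ≥ 1 be integers, let l₀, …, l_t be integers with lᵢ ≥ 1 − m for all i, and let s₀, …, s_t be natural numbers, not all zero. Then there exist a constant A > 0 and a positive integer K such that for all k ≥ K the weighted sum Σ_{i=0}^{t} sᵢ·W_{mk+lᵢ} is nonzero and |1/(Σ_{i=0}^{t} sᵢ·W_{mk+lᵢ}) − 1/(c₁·Σ_{i=0}^{t} sᵢ·α^{mk+lᵢ})| ≤ A·|β|^{mk}/α^{2mk}. -/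
/-!
Factor `α ^ (m k)` and `β ^ (m k)` out of the two halves of the Binet form: the weighted sum
becomes `x - e` with `x = c₁ P₀ α ^ (m k)` and `e = c₂ Q₀ β ^ (m k)` for fixed `P₀ > 0` and `Q₀`.
Since `|β| < α`, eventually `2 |e| ≤ x`, and then
`|1 / (x - e) - 1 / x| = |e| / (x (x - e)) ≤ 2 |e| / x ^ 2`, which is the claimed bound.
-/

open Filter Topology

lemma abs_sub_sqrt_div_two_lt {p d : ℝ} (hp : 0 < p) (hd : 0 < d) :
    |(p - √d) / 2| < (p + √d) / 2 := by
  have hsqrt : 0 < √d := Real.sqrt_pos.mpr hd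
  rw [abs_lt]
  constructor <;> linarith

/-- The exponents must avoid `0` because `0 ^ 0 = 1`. -/
lemma Finset.sum_mul_zpow_add {ι K : Type*} [Field K] (S : Finset ι) (w : ι → K) (l : ι → ℤ)
    (γ : K) (n : ℤ) (h : ∀ i ∈ S, n + l i ≠ 0) :
    ∑ i ∈ S, w i * γ ^ (n + l i) = γ ^ n * ∑ i ∈ S, w i * γ ^ l i := by
  rw [Finset.mul_sum]
  refine Finset.sum_congr rfl fun i hi => ?_
  rw [zpow_add' (Or.inr (Or.inl (h i hi)))]
  ring

lemma abs_one_div_sub_sub_one_div_le {x e : ℝ} (hx : 0 < x) (he : 2 * |e| ≤ x) :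
    x - e ≠ 0 ∧ |1 / (x - e) - 1 / x| ≤ 2 * |e| / x ^ 2 := by
  have hxe : x / 2 ≤ x - e := by linarith [le_abs_self e]
  have hxe₀ : 0 < x - e := by linarith
  refine ⟨hxe₀.ne', ?_⟩
  have hdiff : 1 / (x - e) - 1 / x = e / ((x - e) * x) := by field_simp; ring
  rw [hdiff, abs_div, abs_of_pos (mul_pos hxe₀ hx)]
  calc |e| / ((x - e) * x) ≤ |e| / (x / 2 * x) := by gcongr
    _ = 2 * |e| / x ^ 2 := by field_simp

lemma exists_pos_eventually_abs_one_div_sub_le {C E α β : ℝ} (hC : 0 < C) (hβα : |β| < α) :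
    ∃ A : ℝ, 0 < A ∧ ∀ᶠ N : ℕ in atTop, C * α ^ N - E * β ^ N ≠ 0 ∧
      |1 / (C * α ^ N - E * β ^ N) - 1 / (C * α ^ N)| ≤ A * |β| ^ N / α ^ (2 * N) := by
  have hα : 0 < α := (abs_nonneg β).trans_lt hβα
  have hratio : Tendsto (fun N : ℕ => 2 * |E| * (|β| / α) ^ N) atTop (𝓝 0) := by
    simpa using (tendsto_pow_atTop_nhds_zero_of_lt_one (by positivity)
      ((div_lt_one hα).mpr hβα)).const_mul (2 * |E|)
  refine ⟨2 * (|E| + 1) / C ^ 2, by positivity, ?_⟩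
  filter_upwards [hratio.eventually_lt_const hC] with N hN
  have hsmall : 2 * |E * β ^ N| ≤ C * α ^ N := by
    rw [div_pow, ← mul_div_assoc, div_lt_iff₀ (by positivity)] at hN
    rw [abs_mul, abs_pow]
    linarith
  obtain ⟨hne, hle⟩ := abs_one_div_sub_sub_one_div_le (by positivity) hsmall
  refine ⟨hne, hle.trans ?_⟩
  rw [abs_mul, abs_pow, pow_mul', mul_pow, ← div_div, div_le_div_iff_of_pos_right (by positivity),
    div_mul_eq_mul_div]
  gcongr ?_ / _
  nlinarith [pow_nonneg (abs_nonneg β) N]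

theorem reciprocal_weighted_sum_estimate_general (p q : ℤ) (α β c₁ c₂ : ℝ)
    (hp : 1 ≤ p)
    (hdisc : 0 < (p : ℝ) ^ 2 + 4 * q)
    (hα : α = ((p : ℝ) + Real.sqrt ((p : ℝ) ^ 2 + 4 * q)) / 2)
    (hβ : β = ((p : ℝ) - Real.sqrt ((p : ℝ) ^ 2 + 4 * q)) / 2)
    (hc₁pos : 0 < c₁)
    (W : ℤ → ℝ) (hW : ∀ n : ℤ, W n = c₁ * α ^ n - c₂ * β ^ n)
    (m t : ℕ) (hm : 1 ≤ m)
    (l : ℕ → ℤ) (hl : ∀ i ≤ t, 1 - (m : ℤ) ≤ l i)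
    (s : ℕ → ℕ) (hs : ∃ i ≤ t, s i ≠ 0) :
    ∃ A : ℝ, 0 < A ∧ ∃ K : ℕ, 1 ≤ K ∧ ∀ k : ℕ, K ≤ k →
      (∑ i ∈ Finset.range (t + 1), (s i : ℝ) * W ((m : ℤ) * k + l i)) ≠ 0 ∧
      |1 / (∑ i ∈ Finset.range (t + 1), (s i : ℝ) * W ((m : ℤ) * k + l i)) -
        1 / (c₁ * ∑ i ∈ Finset.range (t + 1), (s i : ℝ) * α ^ ((m : ℤ) * k + l i))| ≤
        A * |β| ^ (m * k) / α ^ (2 * m * k) := by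
  have hβα : |β| < α := hα ▸ hβ ▸ abs_sub_sqrt_div_two_lt (by exact_mod_cast hp) hdisc
  have hα₀ : 0 < α := (abs_nonneg β).trans_lt hβα
  set P₀ := ∑ i ∈ Finset.range (t + 1), (s i : ℝ) * α ^ l i
  set Q₀ := ∑ i ∈ Finset.range (t + 1), (s i : ℝ) * β ^ l i
  have hP₀ : 0 < P₀ := by
    obtain ⟨i, hit, hsi⟩ := hs
    refine Finset.sum_pos' (fun j _ => by positivity)
      ⟨i, Finset.mem_range.mpr (Nat.lt_succ_of_le hit), ?_⟩
    have : 0 < s i := Nat.pos_of_ne_zero hsi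
    positivity
  obtain ⟨A, hA, hev⟩ :=
    exists_pos_eventually_abs_one_div_sub_le (E := c₂ * Q₀) (mul_pos hc₁pos hP₀) hβα
  have hmk : Tendsto (fun k : ℕ => m * k) atTop atTop :=
    tendsto_id.const_mul_atTop' hm
  obtain ⟨K, hK⟩ := eventually_atTop.mp (hmk.eventually hev)
  refine ⟨A, hA, max K 1, le_max_right _ _, fun k hk => ?_⟩
  have hfactor : ∀ γ : ℝ, ∑ i ∈ Finset.range (t + 1), (s i : ℝ) * γ ^ ((m : ℤ) * k + l i) =
      γ ^ (m * k) * ∑ i ∈ Finset.range (t + 1), (s i : ℝ) * γ ^ l i := by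
    intro γ
    rw [Finset.sum_mul_zpow_add, ← Nat.cast_mul, zpow_natCast]
    intro i hi
    have := hl i (Nat.lt_succ_iff.mp (Finset.mem_range.mp hi))
    have : (m : ℤ) ≤ m * k := le_mul_of_one_le_right (by positivity) (by omega)
    omega
  have hsum : ∑ i ∈ Finset.range (t + 1), (s i : ℝ) * W ((m : ℤ) * k + l i) =
      c₁ * P₀ * α ^ (m * k) - c₂ * Q₀ * β ^ (m * k) := by
    simp only [hW, mul_sub, Finset.sum_sub_distrib, mul_left_comm _ c₁, mul_left_comm _ c₂,
      ← Finset.mul_sum, hfactor]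
    ring
  rw [hsum, hfactor, mul_assoc 2, mul_comm (α ^ _) P₀, ← mul_assoc]
  exact hK k (le_of_max_le_left hk)

/-- Lemma 2.3: for the generalized Fibonacci sequence in Binet form with `c₁ > 0`,
the reciprocal of the weighted sum `Σᵢ sᵢ·W_{mk+lᵢ}` is, for all large `k`,
within `A·|β|^{mk}/α^{2mk}` of `1/(c₁·Σᵢ sᵢ·α^{mk+lᵢ})`. -/
theorem reciprocal_weighted_sum_estimate (p q a b : ℤ) (α β c₁ c₂ : ℝ)
    (hp : 1 ≤ p)
    (hdisc : 0 < (p : ℝ) ^ 2 + 4 * q)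
    (hα : α = ((p : ℝ) + Real.sqrt ((p : ℝ) ^ 2 + 4 * q)) / 2)
    (hβ : β = ((p : ℝ) - Real.sqrt ((p : ℝ) ^ 2 + 4 * q)) / 2)
    (hc₁ : c₁ = ((b : ℝ) - a * β) / (α - β))
    (hc₂ : c₂ = ((b : ℝ) - a * α) / (α - β))
    (hc₁pos : 0 < c₁)
    (W : ℤ → ℝ) (hW : ∀ n : ℤ, W n = c₁ * α ^ n - c₂ * β ^ n)
    (m t : ℕ) (hm : 1 ≤ m) (ht : 1 ≤ t)
    (l : ℕ → ℤ) (hl : ∀ i ≤ t, 1 - (m : ℤ) ≤ l i)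
    (s : ℕ → ℕ) (hs : ∃ i ≤ t, s i ≠ 0) :
    ∃ A : ℝ, 0 < A ∧ ∃ K : ℕ, 1 ≤ K ∧ ∀ k : ℕ, K ≤ k →
      (∑ i ∈ Finset.range (t + 1), (s i : ℝ) * W ((m : ℤ) * k + l i)) ≠ 0 ∧
      |1 / (∑ i ∈ Finset.range (t + 1), (s i : ℝ) * W ((m : ℤ) * k + l i)) -
        1 / (c₁ * ∑ i ∈ Finset.range (t + 1), (s i : ℝ) * α ^ ((m : ℤ) * k + l i))| ≤
        A * |β| ^ (m * k) / α ^ (2 * m * k) :=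
  reciprocal_weighted_sum_estimate_general p q α β c₁ c₂ hp hdisc hα hβ hc₁pos W hW m t hm l hl s hs
end

section
/- Let p ≥ 1 and q be integers with p² + 4q > 0 and p² + 2q − 2 < p·√(p² + 4q), set α = (p + √(p² + 4q))/2, β = (p − √(p² + 4q))/2, let a, b be integers with c₁ = (b − aβ)/(α − β) > 0, and define Wₙ = c₁αⁿ − c₂βⁿ where c₂ = (b − aα)/(α − β). Let m, t ≥ 1 be integers, let l₀, …, l_t be integers with lᵢ ≥ 1 − m for all i, and let s₀, …, s_t be natural numbers, not all zero. Then lim_{n→∞} [ (Σ_{k=n}^{∞} 1/(Σ_{i=0}^{t} sᵢ·W_{mk+lᵢ}))^{−1} − Σ_{i=0}^{t} sᵢ·(W_{mn+lᵢ} − W_{m(n−1)+lᵢ}) ] = 0. -/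
/-!
Put `A n = ∑ᵢ sᵢ W_{mn+lᵢ}`. Since `|β| < 1`, the Binet form gives `A n = C (αᵐ)ⁿ + o(1)` with
`C = c₁ ∑ᵢ sᵢ α^{lᵢ} > 0`, and integrality of `p² + 4q` forces `α ≥ 1`. For a sequence
`A n = C aⁿ + o(1)` with `a > 1`, the terms `1 / A k` differ from `1 / (C aᵏ)` by `o(a⁻²ᵏ)`,
so the tail sum differs from the geometric tail `(C (1 - a⁻¹) aⁿ)⁻¹` by `o(a⁻²ⁿ)`, which is
`o` of its square. Inverting, `(∑_{k ≥ n} 1 / A k)⁻¹ = C (1 - a⁻¹) aⁿ + o(1)`, and this is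
`A n - A (n - 1) + o(1)`.
-/

open Filter Topology Asymptotics Finset

theorem Asymptotics.IsLittleO.tsum_nat_add_pow {E : Type*} [SeminormedAddCommGroup E]
    {u : ℕ → E} {ρ : ℝ} (hρ₀ : 0 ≤ ρ) (hρ₁ : ρ < 1) (hu : u =o[atTop] (ρ ^ ·)) :
    (fun n ↦ ∑' k, u (n + k)) =o[atTop] (ρ ^ ·) := by
  refine IsLittleO.of_bound fun ε hε ↦ ?_
  obtain ⟨N, hN⟩ := eventually_atTop.mp (hu.def (mul_pos hε (sub_pos.mpr hρ₁)))
  filter_upwards [eventually_ge_atTop N] with n hn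
  have hsum : HasSum (fun k ↦ ε * (1 - ρ) * ρ ^ n * ρ ^ k) (ε * ρ ^ n) := by
    have : 1 - ρ ≠ 0 := (sub_pos.mpr hρ₁).ne'
    rw [show ε * ρ ^ n = ε * (1 - ρ) * ρ ^ n * (1 - ρ)⁻¹ by field_simp]
    exact (hasSum_geometric_of_lt_one hρ₀ hρ₁).mul_left _
  rw [Real.norm_of_nonneg (pow_nonneg hρ₀ n)]
  refine tsum_of_norm_bounded hsum fun k ↦ ?_
  calc ‖u (n + k)‖ ≤ ε * (1 - ρ) * ‖ρ ^ (n + k)‖ := hN _ (by omega)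
    _ = ε * (1 - ρ) * ρ ^ n * ρ ^ k := by
      rw [Real.norm_of_nonneg (by positivity), pow_add]; ring

theorem Asymptotics.IsLittleO.tendsto_inv_sub_inv {α : Type*} {l : Filter α} {T G : α → ℝ}
    (hG : Tendsto G l (𝓝 0)) (hG₀ : ∀ᶠ x in l, G x ≠ 0)
    (h : (fun x ↦ T x - G x) =o[l] (fun x ↦ G x ^ 2)) :
    Tendsto (fun x ↦ (T x)⁻¹ - (G x)⁻¹) l (𝓝 0) := by
  -- `T⁻¹ - G⁻¹ = -X / (1 + X G)` with `X = (T - G) / G² → 0`.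
  set X := fun x ↦ (T x - G x) / G x ^ 2
  have hX : Tendsto X l (𝓝 0) := h.tendsto_div_nhds_zero
  have hXG : Tendsto (fun x ↦ X x * G x) l (𝓝 0) := by simpa using hX.mul hG
  have hlim := hX.neg.div (tendsto_const_nhds.add hXG) (by norm_num : (1 : ℝ) + 0 ≠ 0)
  rw [neg_zero, zero_div] at hlim
  refine hlim.congr' ?_
  filter_upwards [hG₀, hXG.eventually_ne (by norm_num : (0 : ℝ) ≠ -1)] with x hx hx'
  have : 1 + X x * G x ≠ 0 := fun h ↦ hx' (by linarith)
  have hT : T x = G x * (1 + X x * G x) := by simp only [X]; field_simp; ring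
  rw [Pi.div_apply, hT]
  field_simp
  ring

section

variable {A : ℕ → ℝ} {C a : ℝ}

theorem summable_one_div_mul_pow (ha : 1 < a) : Summable fun k ↦ 1 / (C * a ^ k) := by
  simpa [mul_inv, inv_pow] using (summable_geometric_of_lt_one
    (inv_nonneg.2 (by linarith)) (inv_lt_one_of_one_lt₀ ha)).mul_right C⁻¹

theorem tsum_one_div_mul_pow_add (ha : 1 < a) (n : ℕ) :
    ∑' k, 1 / (C * a ^ (n + k)) = (C * (1 - a⁻¹) * a ^ n)⁻¹ := by
  simp_rw [pow_add, one_div, mul_inv, ← inv_pow, tsum_mul_left,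
    tsum_geometric_of_lt_one (inv_nonneg.2 (by linarith)) (inv_lt_one_of_one_lt₀ ha)]
  ring

theorem tendsto_div_pow_of_tendsto_sub_mul_pow (ha : 1 < a)
    (hE : Tendsto (fun n ↦ A n - C * a ^ n) atTop (𝓝 0)) :
    Tendsto (fun n ↦ A n / a ^ n) atTop (𝓝 C) := by
  have h := (hE.div_atTop (tendsto_pow_atTop_atTop_of_one_lt ha)).const_add C
  rw [add_zero] at h
  refine h.congr fun n ↦ ?_
  field_simp
  ring

theorem isLittleO_one_div_sub_one_div_mul_pow (hC : C ≠ 0) (ha : 1 < a)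
    (hE : Tendsto (fun n ↦ A n - C * a ^ n) atTop (𝓝 0)) :
    (fun k ↦ 1 / A k - 1 / (C * a ^ k)) =o[atTop] fun k ↦ ((a ^ 2)⁻¹) ^ k := by
  have hratio := tendsto_div_pow_of_tendsto_sub_mul_pow ha hE
  have hlim := (hE.neg.mul (hratio.inv₀ hC)).div_const C
  rw [neg_zero, zero_mul, zero_div] at hlim
  rw [isLittleO_iff_tendsto fun k hk ↦ absurd hk (by positivity)]
  refine hlim.congr' ?_
  filter_upwards [hratio.eventually_ne hC] with k hk
  have hA : A k ≠ 0 := (div_ne_zero_iff.1 hk).1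
  have : a ≠ 0 := by positivity
  rw [inv_pow, div_inv_eq_mul]
  field_simp
  ring

theorem isLittleO_tsum_one_div_nat_add_sub (hC : C ≠ 0) (ha : 1 < a)
    (hE : Tendsto (fun n ↦ A n - C * a ^ n) atTop (𝓝 0)) :
    (fun n ↦ ∑' k, 1 / A (n + k) - (C * (1 - a⁻¹) * a ^ n)⁻¹) =o[atTop]
      fun n ↦ ((a ^ 2)⁻¹) ^ n := by
  have hρ₀ : 0 ≤ (a ^ 2)⁻¹ := by positivity
  have hρ₁ : (a ^ 2)⁻¹ < 1 := inv_lt_one_of_one_lt₀ (one_lt_pow₀ ha two_ne_zero)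
  have hu := isLittleO_one_div_sub_one_div_mul_pow hC ha hE
  have hsum : ∀ n, Summable fun k ↦ 1 / A (n + k) - 1 / (C * a ^ (n + k)) := fun n ↦
    ((summable_nat_add_iff n).2 (summable_of_isBigO_nat
      (summable_geometric_of_lt_one hρ₀ hρ₁) hu.isBigO)).congr fun k ↦ by rw [add_comm]
  have hsum' : ∀ n, Summable fun k ↦ 1 / (C * a ^ (n + k)) := fun n ↦
    ((summable_nat_add_iff n).2 (summable_one_div_mul_pow ha)).congr fun k ↦ by rw [add_comm]
  refine (hu.tsum_nat_add_pow hρ₀ hρ₁).congr_left fun n ↦ ?_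
  rw [← tsum_one_div_mul_pow_add ha n, eq_sub_iff_add_eq, ← (hsum n).tsum_add (hsum' n)]
  simp_rw [sub_add_cancel]

theorem tendsto_inv_tsum_one_div_sub_sub_of_one_lt (hC : C ≠ 0) (ha : 1 < a)
    (hE : Tendsto (fun n ↦ A n - C * a ^ n) atTop (𝓝 0)) :
    Tendsto (fun n ↦ (∑' k, 1 / A (n + k))⁻¹ - (A n - A (n - 1))) atTop (𝓝 0) := by
  set c := C * (1 - a⁻¹)
  have hc : c ≠ 0 := mul_ne_zero hC (sub_ne_zero.2 (inv_lt_one_of_one_lt₀ ha).ne')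
  have ha₀ : a ≠ 0 := by positivity
  have hG : Tendsto (fun n ↦ (c * a ^ n)⁻¹) atTop (𝓝 0) := by
    have h := (tendsto_pow_atTop_nhds_zero_of_lt_one
      (inv_nonneg.2 (by linarith)) (inv_lt_one_of_one_lt₀ ha)).const_mul c⁻¹
    rw [mul_zero] at h
    exact h.congr fun n ↦ by rw [inv_pow, ← mul_inv]
  have hG₂ : (fun n ↦ ((a ^ 2)⁻¹) ^ n) =O[atTop] fun n ↦ ((c * a ^ n)⁻¹) ^ 2 :=
    ((isBigO_refl _ _).const_mul_left (c ^ 2)).congr_left fun n ↦ by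
      simp only [inv_pow, ← pow_mul]
      field_simp
      ring
  have hinv := ((isLittleO_tsum_one_div_nat_add_sub hC ha hE).trans_isBigO hG₂).tendsto_inv_sub_inv
    hG (Eventually.of_forall fun n ↦ by positivity)
  have hE' := hE.sub (hE.comp (tendsto_sub_atTop_nat 1))
  rw [sub_zero] at hE'
  have h := hinv.sub hE'
  rw [sub_zero] at h
  refine h.congr' ?_
  filter_upwards [eventually_ge_atTop 1] with n hn
  obtain ⟨n, rfl⟩ := Nat.exists_eq_add_of_le' hn
  simp only [Function.comp_apply, inv_inv, Nat.add_sub_cancel, pow_succ, c]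
  field_simp
  ring

/-- The tail sums diverge, so `∑'` is `0` by convention and both sides tend to `0`. -/
theorem tendsto_inv_tsum_one_div_sub_sub_of_tendsto (hC : C ≠ 0) (hA : Tendsto A atTop (𝓝 C)) :
    Tendsto (fun n ↦ (∑' k, 1 / A (n + k))⁻¹ - (A n - A (n - 1))) atTop (𝓝 0) := by
  have hdiv (n : ℕ) : ¬Summable fun k ↦ 1 / A (n + k) := fun hsum ↦ by
    have hsum' : Summable fun k ↦ 1 / A (k + n) := hsum.congr fun k ↦ by rw [add_comm]
    have h := ((summable_nat_add_iff (f := fun k ↦ 1 / A k) n).1 hsum').tendsto_atTop_zero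
    simp only [one_div] at h
    exact inv_ne_zero hC (tendsto_nhds_unique (hA.inv₀ hC) h)
  simp only [tsum_eq_zero_of_not_summable (hdiv _), inv_zero, zero_sub]
  simpa using (hA.sub (hA.comp (tendsto_sub_atTop_nat 1))).neg

theorem tendsto_inv_tsum_one_div_sub_sub (hC : C ≠ 0) (ha : 1 ≤ a)
    (hE : Tendsto (fun n ↦ A n - C * a ^ n) atTop (𝓝 0)) :
    Tendsto (fun n ↦ (∑' k, 1 / A (n + k))⁻¹ - (A n - A (n - 1))) atTop (𝓝 0) := by
  rcases ha.eq_or_lt with rfl | ha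
  · exact tendsto_inv_tsum_one_div_sub_sub_of_tendsto hC
      (tendsto_sub_nhds_zero_iff.1 (by simpa using hE))
  · exact tendsto_inv_tsum_one_div_sub_sub_of_one_lt hC ha hE

end

theorem tendsto_zpow_atTop_nhds_zero_of_abs_lt_one {r : ℝ} (h : |r| < 1) :
    Tendsto (fun e : ℤ ↦ r ^ e) atTop (𝓝 0) := by
  have htoNat : Tendsto Int.toNat atTop atTop :=
    tendsto_atTop_atTop.2 fun b ↦ ⟨b, fun e he ↦ by omega⟩
  refine ((tendsto_pow_atTop_nhds_zero_of_abs_lt_one h).comp htoNat).congr' ?_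
  filter_upwards [eventually_ge_atTop 0] with e he
  rw [Function.comp_apply, ← zpow_natCast, Int.toNat_of_nonneg he]

theorem tendsto_weighted_binet_sum_sub_mul_pow {ι : Type*} {W : ℤ → ℝ}
    {α β c₁ c₂ : ℝ} (hW : ∀ n, W n = c₁ * α ^ n - c₂ * β ^ n) (hα : α ≠ 0) (hβ : |β| < 1)
    {m : ℕ} (hm : 1 ≤ m)
    (I : Finset ι) (s : ι → ℝ) (l : ι → ℤ) :
    Tendsto (fun n : ℕ ↦ ∑ i ∈ I, s i * W (m * n + l i) -
      c₁ * (∑ i ∈ I, s i * α ^ l i) * (α ^ m) ^ n) atTop (𝓝 0) := by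
  have hexp (i : ι) : Tendsto (fun n : ℕ ↦ (m : ℤ) * n + l i) atTop atTop :=
    tendsto_atTop_add_const_right _ _ (tendsto_natCast_atTop_atTop.const_mul_atTop' (by omega))
  have h := tendsto_finsetSum I fun i _ ↦
    ((tendsto_zpow_atTop_nhds_zero_of_abs_lt_one hβ).comp (hexp i)).const_mul (-(s i * c₂))
  simp only [mul_zero, sum_const_zero] at h
  refine h.congr fun n ↦ ?_
  simp only [hW, Function.comp_apply, mul_sum, sum_mul, ← sum_sub_distrib]
  refine sum_congr rfl fun i _ ↦ ?_
  rw [zpow_add₀ hα, zpow_mul, zpow_natCast, zpow_natCast]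
  ring

theorem abs_sub_sqrt_div_two_lt_one {p q : ℝ} (hdisc : 0 ≤ p ^ 2 + 4 * q)
    (hcond : p ^ 2 + 2 * q - 2 < p * √(p ^ 2 + 4 * q)) :
    |(p - √(p ^ 2 + 4 * q)) / 2| < 1 := by
  rw [← sq_lt_one_iff_abs_lt_one]
  nlinarith [Real.sq_sqrt hdisc]

theorem one_le_add_sqrt_div_two {p q : ℤ} (hp : 1 ≤ p) (hdisc : 0 < (p : ℝ) ^ 2 + 4 * q) :
    1 ≤ ((p : ℝ) + √((p : ℝ) ^ 2 + 4 * q)) / 2 := by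
  have hdisc' : (1 : ℝ) ≤ (p : ℝ) ^ 2 + 4 * q := by
    exact_mod_cast (show (0 : ℤ) < p ^ 2 + 4 * q by exact_mod_cast hdisc)
  have hp' : (1 : ℝ) ≤ p := by exact_mod_cast hp
  linarith [Real.one_le_sqrt.2 hdisc']

theorem inverse_tail_sum_asymptotic_general (p q : ℤ) (α β c₁ c₂ : ℝ)
    (hp : 1 ≤ p)
    (hdisc : 0 < (p : ℝ) ^ 2 + 4 * q)
    (hcond : (p : ℝ) ^ 2 + 2 * q - 2 < p * Real.sqrt ((p : ℝ) ^ 2 + 4 * q))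
    (hα : α = ((p : ℝ) + Real.sqrt ((p : ℝ) ^ 2 + 4 * q)) / 2)
    (hβ : β = ((p : ℝ) - Real.sqrt ((p : ℝ) ^ 2 + 4 * q)) / 2)
    (hc₁pos : 0 < c₁)
    (W : ℤ → ℝ) (hW : ∀ n : ℤ, W n = c₁ * α ^ n - c₂ * β ^ n)
    (m t : ℕ) (hm : 1 ≤ m)
    (l : ℕ → ℤ)
    (s : ℕ → ℕ) (hs : ∃ i ≤ t, s i ≠ 0) :
    Tendsto (fun n : ℕ =>
      (∑' k : ℕ,
        1 / (∑ i ∈ Finset.range (t + 1), (s i : ℝ) * W ((m : ℤ) * (n + k) + l i)))⁻¹ -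
      ∑ i ∈ Finset.range (t + 1),
        (s i : ℝ) * (W ((m : ℤ) * n + l i) - W ((m : ℤ) * ((n : ℤ) - 1) + l i)))
      atTop (nhds 0) := by
  have hα₁ : 1 ≤ α := hα ▸ one_le_add_sqrt_div_two hp hdisc
  have hβ₁ : |β| < 1 := hβ ▸ abs_sub_sqrt_div_two_lt_one hdisc.le hcond
  obtain ⟨i₀, hi₀, hsi₀⟩ := hs
  have hC : 0 < c₁ * ∑ i ∈ range (t + 1), (s i : ℝ) * α ^ l i := by
    have hsi₀' : 0 < (s i₀ : ℝ) := by exact_mod_cast Nat.pos_of_ne_zero hsi₀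
    exact mul_pos hc₁pos (sum_pos' (fun i _ ↦ by positivity)
      ⟨i₀, by simpa [Nat.lt_succ_iff], by positivity⟩)
  refine (tendsto_inv_tsum_one_div_sub_sub hC.ne' (one_le_pow₀ hα₁)
    (tendsto_weighted_binet_sum_sub_mul_pow hW (by positivity) hβ₁ hm _ _ l)).congr' ?_
  filter_upwards [eventually_ge_atTop 1] with n hn
  simp [Nat.cast_sub hn, sum_sub_distrib, mul_sub]

/-- Theorem 3.1: the inverse of the tail sum `Σ_{k=n}^∞ 1/(Σᵢ sᵢ·W_{mk+lᵢ})` is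
asymptotically `Σᵢ sᵢ·(W_{mn+lᵢ} − W_{m(n−1)+lᵢ})`. -/
theorem inverse_tail_sum_asymptotic (p q a b : ℤ) (α β c₁ c₂ : ℝ)
    (hp : 1 ≤ p)
    (hdisc : 0 < (p : ℝ) ^ 2 + 4 * q)
    (hcond : (p : ℝ) ^ 2 + 2 * q - 2 < p * Real.sqrt ((p : ℝ) ^ 2 + 4 * q))
    (hα : α = ((p : ℝ) + Real.sqrt ((p : ℝ) ^ 2 + 4 * q)) / 2)
    (hβ : β = ((p : ℝ) - Real.sqrt ((p : ℝ) ^ 2 + 4 * q)) / 2)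
    (hc₁ : c₁ = ((b : ℝ) - a * β) / (α - β))
    (hc₂ : c₂ = ((b : ℝ) - a * α) / (α - β))
    (hc₁pos : 0 < c₁)
    (W : ℤ → ℝ) (hW : ∀ n : ℤ, W n = c₁ * α ^ n - c₂ * β ^ n)
    (m t : ℕ) (hm : 1 ≤ m) (ht : 1 ≤ t)
    (l : ℕ → ℤ) (hl : ∀ i ≤ t, 1 - (m : ℤ) ≤ l i)
    (s : ℕ → ℕ) (hs : ∃ i ≤ t, s i ≠ 0) :
    Tendsto (fun n : ℕ =>
      (∑' k : ℕ,
        1 / (∑ i ∈ Finset.range (t + 1), (s i : ℝ) * W ((m : ℤ) * (n + k) + l i)))⁻¹ -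
      ∑ i ∈ Finset.range (t + 1),
        (s i : ℝ) * (W ((m : ℤ) * n + l i) - W ((m : ℤ) * ((n : ℤ) - 1) + l i)))
      atTop (nhds 0) :=
  inverse_tail_sum_asymptotic_general p q α β c₁ c₂ hp hdisc hcond hα hβ hc₁pos W hW m t hm l s hs
end
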